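/- Let f be analytic on the right half plane H₊ = {h : Re h > 0} with Re f(h) > 0 for all h ∈ H₊, and suppose f(1) is real. Define α(h) = (|1+h| + |1−h|)/(|1+h| − |1−h|) for h ∈ H₊. Then for all h ∈ H₊: α(h)⁻¹ f(1) ≤ |f(h)| ≤ α(h) f(1). -/

import Mathlib

/-!
Composing `f` with the Cayley map `z ↦ (1 + z) / (1 - z)` from the unit disk onto the right
half plane, and then with `w ↦ (w - f 1) / (w + conj (f 1))`, which maps the right half plane
into the unit disk, gives a holomorphic self-map of the disk fixing `0`. The Schwarz lemma at
`z = (h - 1) / (h + 1)` yields `‖h + 1‖ ‖f h - f 1‖ ≤ ‖h - 1‖ ‖f h + conj (f 1)‖`, and when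
`f 1` is real the triangle inequality turns this into both bounds.
-/

open Complex ComplexConjugate Metric Set

theorem norm_sub_lt_norm_add_conj {w v : ℂ} (hw : 0 < w.re) (hv : 0 < v.re) :
    ‖w - v‖ < ‖w + conj v‖ := by
  have hsq : ‖w - v‖ ^ 2 < ‖w + conj v‖ ^ 2 := by
    simp only [Complex.sq_norm, Complex.normSq_apply, sub_re, sub_im, add_re, add_im,
      conj_re, conj_im]
    nlinarith [mul_pos hw hv]
  exact lt_of_pow_lt_pow_left₀ 2 (norm_nonneg _) hsq

theorem norm_sub_one_lt_norm_add_one {h : ℂ} (hh : 0 < h.re) : ‖h - 1‖ < ‖h + 1‖ := by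
  simpa using norm_sub_lt_norm_add_conj hh (by simp : (0 : ℝ) < (1 : ℂ).re)

theorem re_one_add_div_one_sub_pos {z : ℂ} (hz : z ∈ ball (0 : ℂ) 1) :
    0 < ((1 + z) / (1 - z)).re := by
  rw [mem_ball_zero_iff, ← sq_lt_one_iff₀ (norm_nonneg z), Complex.sq_norm] at hz
  have h1z : 1 - z ≠ 0 := by
    rintro h
    rw [← eq_of_sub_eq_zero h, map_one] at hz
    exact lt_irrefl _ hz
  have hre : ((1 + z) / (1 - z)).re = (1 - normSq z) / normSq (1 - z) := by
    rw [div_re]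
    simp only [add_re, add_im, sub_re, sub_im, one_re, one_im, normSq_apply]
    ring
  rw [hre]
  exact div_pos (by linarith) (normSq_pos.2 h1z)

theorem differentiableOn_one_add_div_one_sub :
    DifferentiableOn ℂ (fun z : ℂ => (1 + z) / (1 - z)) (ball 0 1) := by
  refine ((differentiableOn_const 1).add differentiableOn_id).div
    ((differentiableOn_const 1).sub differentiableOn_id) fun z hz h => ?_
  rw [mem_ball_zero_iff, ← eq_of_sub_eq_zero h] at hz
  simp at hz

theorem norm_sub_le_norm_mul_norm_add_conj_of_re_pos {g : ℂ → ℂ}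
    (hg : DifferentiableOn ℂ g (ball 0 1))
    (hre : ∀ z ∈ ball (0 : ℂ) 1, 0 < (g z).re) {z : ℂ} (hz : z ∈ ball (0 : ℂ) 1) :
    ‖g z - g 0‖ ≤ ‖z‖ * ‖g z + conj (g 0)‖ := by
  have h0 : (0 : ℂ) ∈ ball (0 : ℂ) 1 := mem_ball_self one_pos
  have hden : ∀ w ∈ ball (0 : ℂ) 1, 0 < ‖g w + conj (g 0)‖ := fun w hw =>
    (norm_nonneg _).trans_lt (norm_sub_lt_norm_add_conj (hre w hw) (hre 0 h0))
  set G : ℂ → ℂ := fun w => (g w - g 0) / (g w + conj (g 0))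
  have hGd : DifferentiableOn ℂ G (ball 0 1) :=
    (hg.sub_const _).div (hg.add_const _) fun w hw => norm_pos_iff.1 (hden w hw)
  have hGmaps : MapsTo G (ball 0 1) (closedBall 0 1) := fun w hw => by
    rw [mem_closedBall_zero_iff, norm_div, div_le_one (hden w hw)]
    exact (norm_sub_lt_norm_add_conj (hre w hw) (hre 0 h0)).le
  have hSchwarz := Complex.norm_le_norm_of_mapsTo_ball hGd hGmaps (by simp [G])
    (mem_ball_zero_iff.1 hz)
  rwa [norm_div, div_le_iff₀ (hden z hz)] at hSchwarz

theorem norm_add_one_mul_norm_sub_le_of_re_pos {f : ℂ → ℂ}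
    (hf : DifferentiableOn ℂ f {h | 0 < h.re})
    (hre : ∀ h : ℂ, 0 < h.re → 0 < (f h).re) {h : ℂ} (hh : 0 < h.re) :
    ‖h + 1‖ * ‖f h - f 1‖ ≤ ‖h - 1‖ * ‖f h + conj (f 1)‖ := by
  have hh1 : 0 < ‖h + 1‖ := (norm_nonneg _).trans_lt (norm_sub_one_lt_norm_add_one hh)
  have hcayley : (1 + (h - 1) / (h + 1)) / (1 - (h - 1) / (h + 1)) = h := by
    have := norm_pos_iff.1 hh1
    field_simp
    ring
  set z := (h - 1) / (h + 1)
  have hz : z ∈ ball (0 : ℂ) 1 := by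
    rw [mem_ball_zero_iff, norm_div, div_lt_one hh1]
    exact norm_sub_one_lt_norm_add_one hh
  have key := norm_sub_le_norm_mul_norm_add_conj_of_re_pos
    (g := fun z => f ((1 + z) / (1 - z)))
    (hf.comp differentiableOn_one_add_div_one_sub fun w hw => re_one_add_div_one_sub_pos hw)
    (fun w hw => hre _ (re_one_add_div_one_sub_pos hw)) hz
  simp only [hcayley, sub_zero, add_zero, div_self one_ne_zero] at key
  rw [norm_div, div_mul_eq_mul_div, le_div_iff₀ hh1] at key
  linarith

theorem inv_mul_le_and_le_mul_of_mul_abs_sub_le {A B C F : ℝ} (hB : 0 ≤ B) (hBA : B < A)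
    (h : A * |F - C| ≤ B * (F + C)) :
    ((A + B) / (A - B))⁻¹ * C ≤ F ∧ F ≤ (A + B) / (A - B) * C := by
  have h₁ := (mul_le_mul_of_nonneg_left (le_abs_self (F - C)) (hB.trans hBA.le)).trans h
  have h₂ := (mul_le_mul_of_nonneg_left (neg_le_abs (F - C)) (hB.trans hBA.le)).trans h
  constructor
  · rw [inv_div, div_mul_eq_mul_div, div_le_iff₀ (by linarith)]
    nlinarith
  · rw [div_mul_eq_mul_div, le_div_iff₀ (by linarith)]
    nlinarith

/-- Two-sided bound for analytic functions on the right half plane with positive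
real part, normalized to be real at `h = 1`. -/
theorem half_plane_bound (f : ℂ → ℂ)
    (hf : DifferentiableOn ℂ f {h : ℂ | 0 < h.re})
    (hre : ∀ h : ℂ, 0 < h.re → 0 < (f h).re)
    (h1 : (f 1).im = 0) :
    ∀ h : ℂ, 0 < h.re →
      ((‖1 + h‖ + ‖1 - h‖) /
          (‖1 + h‖ - ‖1 - h‖))⁻¹ * (f 1).re ≤
          ‖f h‖ ∧
        ‖f h‖ ≤
          (‖1 + h‖ + ‖1 - h‖) /
              (‖1 + h‖ - ‖1 - h‖) * (f 1).re := by
  intro h hh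
  have hf1 : f 1 = ((f 1).re : ℂ) := Complex.ext rfl (by simpa using h1)
  have hc : 0 < (f 1).re := hre 1 one_pos
  have hkey := norm_add_one_mul_norm_sub_le_of_re_pos hf hre hh
  rw [hf1, conj_ofReal] at hkey
  rw [add_comm 1 h, norm_sub_rev 1 h]
  refine inv_mul_le_and_le_mul_of_mul_abs_sub_le (norm_nonneg _)
    (norm_sub_one_lt_norm_add_one hh) ?_
  calc ‖h + 1‖ * |‖f h‖ - (f 1).re|
      ≤ ‖h + 1‖ * ‖f h - (f 1).re‖ := by
        gcongr
        simpa [abs_of_pos hc] using abs_norm_sub_norm_le (f h) ((f 1).re : ℂ)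
    _ ≤ ‖h - 1‖ * ‖f h + (f 1).re‖ := hkey
    _ ≤ ‖h - 1‖ * (‖f h‖ + (f 1).re) := by
        gcongr
        simpa [abs_of_pos hc] using norm_add_le (f h) ((f 1).re : ℂ)
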